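/- Let H be an infinitesimal bialgebra of weight λ and A an algebra and coalgebra in the category of weighted infinitesimal Hopf bimodules over H. Then the biproduct D = A ⊕ H, with multiplication (a,x)(b,y) = (ab + x▷b + a◁y, xy) and comultiplication Δ_E(a,x) = Δ_A(a) + φ(a) + ψ(a) + Δ_H(x), is an infinitesimal bialgebra of weight λ if and only if A is a braided infinitesimal bialgebra of weight λ, i.e. Δ_A(ab) = a₁⊗a₂b + ab₁⊗b₂ + a₍₀₎⊗(a₍₁₎▷b) + (a◁b₍₋₁₎)⊗b₍₀₎ + λ(a⊗b). -/
import Mathlib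


open TensorProduct BigOperators
set_option linter.unusedSectionVars false
set_option maxHeartbeats 1000000

/-- Multiplication of the biproduct `A >⋖· H`: `(a,x)(b,y) = (ab + x▷b + a◁y, xy)`. -/
noncomputable def biprodMul {k A H : Type*} [Field k]
    [NonUnitalRing A] [Module k A] [SMulCommClass k A A] [IsScalarTower k A A]
    [NonUnitalRing H] [Module k H] [SMulCommClass k H H] [IsScalarTower k H H]
    (l : H →ₗ[k] A →ₗ[k] A) (rr : A →ₗ[k] H →ₗ[k] A) :
    (A × H) →ₗ[k] (A × H) →ₗ[k] (A × H) :=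
  ((((LinearMap.mul k A).compr₂ (LinearMap.inl k A H)).comp
      (LinearMap.fst k A H)).compl₂ (LinearMap.fst k A H))
  + (((l.compr₂ (LinearMap.inl k A H)).comp
      (LinearMap.snd k A H)).compl₂ (LinearMap.fst k A H))
  + (((rr.compr₂ (LinearMap.inl k A H)).comp
      (LinearMap.fst k A H)).compl₂ (LinearMap.snd k A H))
  + ((((LinearMap.mul k H).compr₂ (LinearMap.inr k A H)).comp
      (LinearMap.snd k A H)).compl₂ (LinearMap.snd k A H))

/-- Comultiplication of the biproduct: `Δ_E(a,x) = Δ_A(a) + φ(a) + ψ(a) + Δ_H(x)`. -/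
noncomputable def biprodComul {k A H : Type*} [Field k]
    [AddCommGroup A] [Module k A] [AddCommGroup H] [Module k H]
    (dA : A →ₗ[k] A ⊗[k] A) (dH : H →ₗ[k] H ⊗[k] H)
    (φ : A →ₗ[k] H ⊗[k] A) (ψ : A →ₗ[k] A ⊗[k] H) :
    (A × H) →ₗ[k] (A × H) ⊗[k] (A × H) :=
  (TensorProduct.map (LinearMap.inl k A H) (LinearMap.inl k A H)).comp
      (dA.comp (LinearMap.fst k A H))
    + (TensorProduct.map (LinearMap.inr k A H) (LinearMap.inl k A H)).comp
      (φ.comp (LinearMap.fst k A H))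
    + (TensorProduct.map (LinearMap.inl k A H) (LinearMap.inr k A H)).comp
      (ψ.comp (LinearMap.fst k A H))
    + (TensorProduct.map (LinearMap.inr k A H) (LinearMap.inr k A H)).comp
      (dH.comp (LinearMap.snd k A H))


namespace Stmt7Aux
variable {R : Type*} [CommRing R]
variable {M N P Q M' N' : Type*}
  [AddCommGroup M] [AddCommGroup N] [AddCommGroup P] [AddCommGroup Q]
  [AddCommGroup M'] [AddCommGroup N']
  [Module R M] [Module R N] [Module R P] [Module R Q] [Module R M'] [Module R N']

theorem map_map (f : M →ₗ[R] M') (g : N →ₗ[R] N') (f' : M' →ₗ[R] P) (g' : N' →ₗ[R] Q)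
    (t : M ⊗[R] N) :
    TensorProduct.map f' g' (TensorProduct.map f g t) = TensorProduct.map (f' ∘ₗ f) (g' ∘ₗ g) t := by
  rw [TensorProduct.map_comp]; rfl

theorem rT_eq (f : M →ₗ[R] P) : LinearMap.rTensor N f = TensorProduct.map f LinearMap.id := rfl
theorem lT_eq (f : N →ₗ[R] P) : LinearMap.lTensor M f = TensorProduct.map LinearMap.id f := rfl

theorem rTensor_map (f : M' →ₗ[R] P) (u : M →ₗ[R] M') (v : N →ₗ[R] N') (t : M ⊗[R] N) :
    LinearMap.rTensor N' f (TensorProduct.map u v t) = TensorProduct.map (f ∘ₗ u) v t := by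
  rw [rT_eq, map_map, LinearMap.id_comp]

theorem lTensor_map (f : N' →ₗ[R] P) (u : M →ₗ[R] M') (v : N →ₗ[R] N') (t : M ⊗[R] N) :
    LinearMap.lTensor M' f (TensorProduct.map u v t) = TensorProduct.map u (f ∘ₗ v) t := by
  rw [lT_eq, map_map, LinearMap.id_comp]

theorem split_left (u : M' →ₗ[R] P) (g : M →ₗ[R] M') (v : N →ₗ[R] Q) (t : M ⊗[R] N) :
    TensorProduct.map (u ∘ₗ g) v t = TensorProduct.map u v (LinearMap.rTensor N g t) := by
  rw [rT_eq, map_map, LinearMap.comp_id]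

theorem split_right (v : N' →ₗ[R] Q) (g : N →ₗ[R] N') (u : M →ₗ[R] P) (t : M ⊗[R] N) :
    TensorProduct.map u (v ∘ₗ g) t = TensorProduct.map u v (LinearMap.lTensor M g t) := by
  rw [lT_eq, map_map, LinearMap.comp_id]

theorem map_zero_left (g : N →ₗ[R] Q) : TensorProduct.map (0 : M →ₗ[R] P) g = 0 :=
  TensorProduct.ext' fun m n => by simp

theorem map_zero_right (f : M →ₗ[R] P) : TensorProduct.map f (0 : N →ₗ[R] Q) = 0 :=
  TensorProduct.ext' fun m n => by simp

end Stmt7Aux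

section Stmt7Lemmas
open LinearMap Stmt7Aux
variable {k A H : Type*} [Field k]
    [NonUnitalRing A] [Module k A] [SMulCommClass k A A] [IsScalarTower k A A]
    [NonUnitalRing H] [Module k H] [SMulCommClass k H H] [IsScalarTower k H H]
    (l : H →ₗ[k] A →ₗ[k] A) (rr : A →ₗ[k] H →ₗ[k] A)
    (dA : A →ₗ[k] A ⊗[k] A) (dH : H →ₗ[k] H ⊗[k] H)
    (φ : A →ₗ[k] H ⊗[k] A) (ψ : A →ₗ[k] A ⊗[k] H)

theorem bpMul_apply (a : A) (x : H) (b : A) (y : H) :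
    biprodMul l rr (a, x) (b, y) = (a * b + l x b + rr a y, x * y) := by
  simp [biprodMul]

theorem bpComul_apply (a : A) (x : H) :
    biprodComul dA dH φ ψ (a, x)
      = TensorProduct.map (inl k A H) (inl k A H) (dA a)
        + TensorProduct.map (inr k A H) (inl k A H) (φ a)
        + TensorProduct.map (inl k A H) (inr k A H) (ψ a)
        + TensorProduct.map (inr k A H) (inr k A H) (dH x) := by
  simp [biprodComul]

theorem bpMul_inl (a : A) (x : H) :
    (biprodMul l rr (a, x)) ∘ₗ inl k A H = inl k A H ∘ₗ (mulLeft k a + l x) := by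
  ext c <;> simp [biprodMul, Module.End.mul_apply, mul_zero, zero_mul]

theorem bpMul_inr (a : A) (x : H) :
    (biprodMul l rr (a, x)) ∘ₗ inr k A H = inl k A H ∘ₗ rr a + inr k A H ∘ₗ mulLeft k x := by
  ext z <;> simp [biprodMul, Module.End.mul_apply, mul_zero, zero_mul]

theorem bpFlip_inl (b : A) (y : H) :
    ((biprodMul l rr).flip (b, y)) ∘ₗ inl k A H
      = inl k A H ∘ₗ (mulRight k b + rr.flip y) := by
  ext c <;> simp [biprodMul, Module.End.mul_apply, mul_zero, zero_mul]

theorem bpFlip_inr (b : A) (y : H) :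
    ((biprodMul l rr).flip (b, y)) ∘ₗ inr k A H
      = inl k A H ∘ₗ l.flip b + inr k A H ∘ₗ mulRight k y := by
  ext z <;> simp [biprodMul, Module.End.mul_apply, mul_zero, zero_mul]

theorem bpComul_inl :
    (biprodComul dA dH φ ψ) ∘ₗ inl k A H
      = TensorProduct.map (inl k A H) (inl k A H) ∘ₗ dA
        + TensorProduct.map (inr k A H) (inl k A H) ∘ₗ φ
        + TensorProduct.map (inl k A H) (inr k A H) ∘ₗ ψ := by
  ext c <;> simp [biprodComul]

theorem bpComul_inr :
    (biprodComul dA dH φ ψ) ∘ₗ inr k A H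
      = TensorProduct.map (inr k A H) (inr k A H) ∘ₗ dH := by
  ext z <;> simp [biprodComul]

theorem prod_tmul_expand (a : A) (x : H) (b : A) (y : H) :
    ((a, x) : A × H) ⊗ₜ[k] ((b, y) : A × H)
      = TensorProduct.map (inl k A H) (inl k A H) (a ⊗ₜ b)
        + TensorProduct.map (inr k A H) (inl k A H) (x ⊗ₜ b)
        + TensorProduct.map (inl k A H) (inr k A H) (a ⊗ₜ y)
        + TensorProduct.map (inr k A H) (inr k A H) (x ⊗ₜ y) := by
  have h0 : ((a, x) : A × H) ⊗ₜ[k] ((b, y) : A × H)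
      = (((a, 0) + (0, x)) : A × H) ⊗ₜ[k] ((((b, 0) + (0, y))) : A × H) := by
    norm_num
  rw [h0, TensorProduct.add_tmul, TensorProduct.tmul_add, TensorProduct.tmul_add]
  simp only [TensorProduct.map_tmul, inl_apply, inr_apply]
  abel

end Stmt7Lemmas

/-- Let `H` be an infinitesimal bialgebra of weight `λ` and `A` an algebra and
coalgebra in the category of weighted infinitesimal Hopf bimodules over `H`.
The biproduct `A >⋖· H` is an infinitesimal bialgebra of weight `λ` if and only if
`A` is a braided infinitesimal bialgebra of weight `λ`, i.e.
`Δ_A(ab) = a₁⊗a₂b + ab₁⊗b₂ + a₍₀₎⊗(a₍₁₎▷b) + (a◁b₍₋₁₎)⊗b₍₀₎ + λ(a⊗b)`. -/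
theorem stmt7 {k A H : Type*} [Field k]
    [NonUnitalRing A] [Module k A] [SMulCommClass k A A] [IsScalarTower k A A]
    [NonUnitalRing H] [Module k H] [SMulCommClass k H H] [IsScalarTower k H H]
    (lam : k)
    (dA : A →ₗ[k] A ⊗[k] A) (dH : H →ₗ[k] H ⊗[k] H)
    (l : H →ₗ[k] A →ₗ[k] A) (rr : A →ₗ[k] H →ₗ[k] A)
    (φ : A →ₗ[k] H ⊗[k] A) (ψ : A →ₗ[k] A ⊗[k] H)
    -- (A, Δ_A) and (H, Δ_H) are coassociative
    (hcoA : ∀ a : A, (TensorProduct.assoc k A A A) ((LinearMap.rTensor A dA) (dA a))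
      = (LinearMap.lTensor A dA) (dA a))
    (hcoH : ∀ x : H, (TensorProduct.assoc k H H H) ((LinearMap.rTensor H dH) (dH x))
      = (LinearMap.lTensor H dH) (dH x))
    -- H is an infinitesimal bialgebra of weight λ
    (hHbialg : ∀ x y : H, dH (x * y)
      = (LinearMap.rTensor H (LinearMap.mulLeft k x)) (dH y)
        + (LinearMap.lTensor H (LinearMap.mulRight k y)) (dH x) + lam • (x ⊗ₜ[k] y))
    -- A is an H-bimodule
    (hm1 : ∀ (x y : H) (a : A), l (x * y) a = l x (l y a))
    (hm2 : ∀ (a : A) (x y : H), rr (rr a x) y = rr a (x * y))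
    (hm3 : ∀ (x : H) (a : A) (y : H), rr (l x a) y = l x (rr a y))
    -- A is an H-bimodule algebra
    (hma1 : ∀ (x : H) (a b : A), l x (a * b) = l x a * b)
    (hma2 : ∀ (a : A) (x : H) (b : A), a * l x b = rr a x * b)
    (hma3 : ∀ (a b : A) (x : H), a * rr b x = rr (a * b) x)
    -- A is an H-bimodule coalgebra
    (hmc1 : ∀ (x : H) (a : A), dA (l x a) = (LinearMap.rTensor A (l x)) (dA a))
    (hmc2 : ∀ (a : A) (x : H), dA (rr a x) = (LinearMap.lTensor A (rr.flip x)) (dA a))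
    -- A is an H-bicomodule
    (hbc1 : ∀ a : A, (TensorProduct.assoc k H H A) ((LinearMap.rTensor A dH) (φ a))
      = (LinearMap.lTensor H φ) (φ a))
    (hbc2 : ∀ a : A, (LinearMap.lTensor A dH) (ψ a)
      = (TensorProduct.assoc k A H H) ((LinearMap.rTensor H ψ) (ψ a)))
    (hbc3 : ∀ a : A, (LinearMap.lTensor H ψ) (φ a)
      = (TensorProduct.assoc k H A H) ((LinearMap.rTensor H φ) (ψ a)))
    -- A is an H-bicomodule algebra
    (hca1 : ∀ a b : A, φ (a * b) = (LinearMap.lTensor H (LinearMap.mulRight k b)) (φ a))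
    (hca2 : ∀ a b : A, ψ (a * b) = (LinearMap.rTensor H (LinearMap.mulLeft k a)) (ψ b))
    -- A is an H-bicomodule coalgebra
    (hcc1 : ∀ a : A, (LinearMap.lTensor H dA) (φ a)
      = (TensorProduct.assoc k H A A) ((LinearMap.rTensor A φ) (dA a)))
    (hcc2 : ∀ a : A, (TensorProduct.assoc k A A H) ((LinearMap.rTensor H dA) (ψ a))
      = (LinearMap.lTensor A ψ) (dA a))
    (hcc3 : ∀ a : A, (LinearMap.lTensor A φ) (dA a)
      = (TensorProduct.assoc k A H A) ((LinearMap.rTensor A ψ) (dA a)))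
    -- (HM1): φ(x▷a) = x₁⊗(x₂▷a) + (x a₍₋₁₎)⊗a₍₀₎ + λ(x⊗a)
    (hHM1 : ∀ (x : H) (a : A), φ (l x a)
      = (TensorProduct.map (LinearMap.id : H →ₗ[k] H) (l.flip a)) (dH x)
        + (LinearMap.rTensor A (LinearMap.mulLeft k x)) (φ a) + lam • (x ⊗ₜ[k] a))
    -- (HM2): ψ(a◁x) = (a◁x₁)⊗x₂ + a₍₀₎⊗a₍₁₎x + λ(a⊗x)
    (hHM2 : ∀ (a : A) (x : H), ψ (rr a x)
      = (TensorProduct.map (rr a) (LinearMap.id : H →ₗ[k] H)) (dH x)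
        + (LinearMap.lTensor A (LinearMap.mulRight k x)) (ψ a) + lam • (a ⊗ₜ[k] x))
    -- (HM3): ψ(x▷a) = (x▷a₍₀₎)⊗a₍₁₎
    (hHM3 : ∀ (x : H) (a : A), ψ (l x a) = (LinearMap.rTensor H (l x)) (ψ a))
    -- (HM4): φ(a◁x) = a₍₋₁₎⊗(a₍₀₎◁x)
    (hHM4 : ∀ (a : A) (x : H), φ (rr a x) = (LinearMap.lTensor H (rr.flip x)) (φ a)) :
    -- the biproduct is a weighted infinitesimal bialgebra ↔ A is braided
    ((∀ e f g : A × H,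
        biprodMul l rr (biprodMul l rr e f) g = biprodMul l rr e (biprodMul l rr f g))
      ∧ (∀ e : A × H,
          (TensorProduct.assoc k (A × H) (A × H) (A × H))
              ((LinearMap.rTensor (A × H) (biprodComul dA dH φ ψ))
                (biprodComul dA dH φ ψ e))
            = (LinearMap.lTensor (A × H) (biprodComul dA dH φ ψ))
                (biprodComul dA dH φ ψ e))
      ∧ (∀ e f : A × H,
          biprodComul dA dH φ ψ (biprodMul l rr e f)
            = (LinearMap.rTensor (A × H) (biprodMul l rr e))
                (biprodComul dA dH φ ψ f)
              + (LinearMap.lTensor (A × H) ((biprodMul l rr).flip f))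
                (biprodComul dA dH φ ψ e)
              + lam • (e ⊗ₜ[k] f)))
    ↔ (∀ a b : A, dA (a * b)
        = (LinearMap.lTensor A (LinearMap.mulRight k b)) (dA a)
          + (LinearMap.rTensor A (LinearMap.mulLeft k a)) (dA b)
          + (TensorProduct.map (LinearMap.id : A →ₗ[k] A) (l.flip b)) (ψ a)
          + (TensorProduct.map (rr a) (LinearMap.id : A →ₗ[k] A)) (φ b)
          + lam • (a ⊗ₜ[k] b)) := by
  classical
  constructor
  · rintro ⟨-, -, h3⟩ a b
    have h := h3 (a, 0) (b, 0)
    rw [bpMul_apply] at h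
    simp only [map_zero, LinearMap.zero_apply, zero_mul, mul_zero, add_zero, zero_add] at h
    rw [bpComul_apply, bpComul_apply, bpComul_apply] at h
    simp only [map_zero, add_zero] at h
    simp only [Stmt7Aux.rTensor_map, Stmt7Aux.lTensor_map, bpMul_inl, bpMul_inr,
      bpFlip_inl, bpFlip_inr, prod_tmul_expand, LinearMap.comp_add,
      TensorProduct.map_add_left, TensorProduct.map_add_right, LinearMap.add_apply,
      map_add, map_smul, smul_add, map_zero, LinearMap.zero_apply, LinearMap.comp_zero,
      LinearMap.zero_comp, Stmt7Aux.map_zero_left, Stmt7Aux.map_zero_right,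
      TensorProduct.tmul_zero, TensorProduct.zero_tmul, smul_zero, add_zero, zero_add] at h
    have h2 := congrArg
      (TensorProduct.map (LinearMap.fst k A H) (LinearMap.fst k A H)) h
    simp only [map_add, map_smul, Stmt7Aux.map_map, ← LinearMap.comp_assoc,
      LinearMap.fst_comp_inl, LinearMap.fst_comp_inr, LinearMap.zero_comp,
      LinearMap.comp_zero, Stmt7Aux.map_zero_left, Stmt7Aux.map_zero_right,
      LinearMap.zero_apply, LinearMap.id_comp, LinearMap.comp_id,
      TensorProduct.map_id, LinearMap.id_apply, smul_zero, add_zero, zero_add] at h2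
    rw [h2]
    simp only [Stmt7Aux.rT_eq, Stmt7Aux.lT_eq]
    abel
  · rintro hbr
    refine ⟨?_, ?_, ?_⟩
    · rintro ⟨a, x⟩ ⟨b, y⟩ ⟨c, z⟩
      simp only [bpMul_apply, Prod.mk.injEq]
      refine ⟨?_, mul_assoc x y z⟩
      simp only [mul_add, add_mul, map_add, LinearMap.add_apply,
        hm1, hm2, hm3, hma1, hma2, hma3, mul_assoc]
      abel
    · rintro ⟨a, x⟩
      rw [bpComul_apply]
      simp only [map_add, Stmt7Aux.rTensor_map, Stmt7Aux.lTensor_map,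
        bpComul_inl, bpComul_inr, TensorProduct.map_add_left, TensorProduct.map_add_right,
        LinearMap.add_apply, Stmt7Aux.split_left, Stmt7Aux.split_right, map_add,
        ← TensorProduct.map_map_assoc]
      simp only [hcoA, hcoH, hbc1, ← hbc2, ← hbc3, ← hcc1, hcc2, ← hcc3]
      abel
    · rintro ⟨a, x⟩ ⟨b, y⟩
      rw [bpMul_apply]
      rw [bpComul_apply, bpComul_apply, bpComul_apply]
      simp only [map_add]
      rw [hbr a b, hmc1 x b, hmc2 a y, hca1 a b, hHM1 x b, hHM4 a y, hca2 a b,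
        hHM3 x b, hHM2 a y, hHbialg x y, prod_tmul_expand]
      simp only [Stmt7Aux.rTensor_map, Stmt7Aux.lTensor_map, bpMul_inl, bpMul_inr,
        bpFlip_inl, bpFlip_inr, LinearMap.comp_add, TensorProduct.map_add_left,
        TensorProduct.map_add_right, LinearMap.add_apply, Stmt7Aux.rT_eq, Stmt7Aux.lT_eq,
        Stmt7Aux.map_map, LinearMap.comp_id, LinearMap.id_comp, map_add, map_smul, smul_add]
      abel
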